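/- arXiv:2501.03041 — 2 statements merged into one kernel-verified Lean document; each statement's English description precedes it below -/
import Mathlib

section
/- Let z = (z₁, …, z_p) be a random vector with independent coordinates satisfying E[z_j] = 0, E[z_j²] = 1, and E[z_j⁴] = 3 + Δ for every j, where Δ is a real constant. Let V be a real symmetric p×p matrix. Then E[(zᵀVz)²] = tr(V)² + 2·tr(V²) + Δ·Σ_{j=1}^p V_{jj}². -/
open MeasureTheory ProbabilityTheory Finset

private lemma aux_hprod
    {Ω : Type*} [MeasurableSpace Ω] (P : Measure Ω) [IsProbabilityMeasure P]
    {p : ℕ} {z : Ω → Fin p → ℝ}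
    (hmeas : ∀ j, Measurable fun ω => z ω j)
    (hindep : iIndepFun (fun j ω => z ω j) P)
    (k : Fin p → ℕ) (s : Finset (Fin p)) :
    ∫ ω, ∏ j ∈ s, z ω j ^ k j ∂P = ∏ j ∈ s, ∫ ω, z ω j ^ k j ∂P := by
  classical
  have hg : iIndepFun (fun j ω => z ω j ^ k j) P :=
    hindep.comp (fun j (x : ℝ) => x ^ k j) (fun j => measurable_id.pow_const (k j))
  have hgmeas : ∀ j, Measurable (fun ω => z ω j ^ k j) := fun j => (hmeas j).pow_const (k j)
  induction s using Finset.induction_on with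
  | empty => simp
  | @insert i s hi ih =>
    simp only [Finset.prod_insert hi]
    have hIndep : IndepFun (fun ω => z ω i ^ k i) (fun ω => ∏ j ∈ s, z ω j ^ k j) P := by
      have h := hg.indepFun_finsetProd_of_notMem hgmeas hi
      have hfun : (∏ j ∈ s, fun ω => z ω j ^ k j) = fun ω => ∏ j ∈ s, z ω j ^ k j := by
        funext ω; simp
      rw [hfun] at h
      exact h.symm
    rw [hIndep.integral_fun_mul_eq_mul_integral (hgmeas i).aestronglyMeasurable
      (Finset.measurable_prod s fun j _ => hgmeas j).aestronglyMeasurable, ih]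

private lemma aux_hmoment
    {Ω : Type*} [MeasurableSpace Ω] (P : Measure Ω) [IsProbabilityMeasure P]
    (p : ℕ) (Δ : ℝ)
    (z : Ω → Fin p → ℝ)
    (hmean : ∀ j, ∫ ω, z ω j ∂P = 0)
    (hvar : ∀ j, ∫ ω, z ω j ^ 2 ∂P = 1)
    (hkurt : ∀ j, ∫ ω, z ω j ^ 4 ∂P = 3 + Δ)
    (hprod : ∀ (k : Fin p → ℕ) (s : Finset (Fin p)),
      ∫ ω, ∏ j ∈ s, z ω j ^ k j ∂P = ∏ j ∈ s, ∫ ω, z ω j ^ k j ∂P) :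
    ∀ a b c d : Fin p, ∫ ω, z ω a * z ω b * z ω c * z ω d ∂P =
      (if a = b then (1:ℝ) else 0) * (if c = d then 1 else 0)
       + (if a = c then 1 else 0) * (if b = d then 1 else 0)
       + (if a = d then 1 else 0) * (if b = c then 1 else 0)
       + (if a = b ∧ a = c ∧ a = d then Δ else 0) := by
  classical
  have h2 : ∀ (m n : ℕ) (i j : Fin p), i ≠ j →
      ∫ ω, z ω i ^ m * z ω j ^ n ∂P = (∫ ω, z ω i ^ m ∂P) * ∫ ω, z ω j ^ n ∂P := by
    intro m n i j hij
    have h := hprod (fun x => if x = i then m else n) {i, j}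
    simpa [Finset.prod_pair hij, if_neg hij.symm] using h
  have h3 : ∀ (m : ℕ) (i j l : Fin p), i ≠ j → i ≠ l → j ≠ l →
      ∫ ω, z ω i ^ m * (z ω j * z ω l) ∂P
        = (∫ ω, z ω i ^ m ∂P) * ((∫ ω, z ω j ∂P) * ∫ ω, z ω l ∂P) := by
    intro m i j l hij hil hjl
    have h := hprod (fun x => if x = i then m else 1) {i, j, l}
    have hi : i ∉ ({j, l} : Finset (Fin p)) := by simp [hij, hil]
    simpa [Finset.prod_insert hi, Finset.prod_pair hjl, if_neg hij.symm, if_neg hil.symm,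
      hmean] using h
  have h30 : ∀ (m : ℕ) (i j l : Fin p), i ≠ j → i ≠ l → j ≠ l →
      ∫ ω, z ω i ^ m * (z ω j * z ω l) ∂P = 0 := by
    intro m i j l hij hil hjl; rw [h3 m i j l hij hil hjl, hmean]; ring
  have h4 : ∀ a b c d : Fin p, a ≠ b → a ≠ c → a ≠ d → b ≠ c → b ≠ d → c ≠ d →
      ∫ ω, z ω a * z ω b * z ω c * z ω d ∂P = 0 := by
    intro a b c d hab hac had hbc hbd hcd
    have h := hprod (fun _ => 1) {a, b, c, d}
    have ha : a ∉ ({b, c, d} : Finset (Fin p)) := by simp [hab, hac, had]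
    have hb : b ∉ ({c, d} : Finset (Fin p)) := by simp [hbc, hbd]
    simp only [Finset.prod_insert ha, Finset.prod_insert hb, Finset.prod_pair hcd, pow_one] at h
    rw [show (fun ω => z ω a * z ω b * z ω c * z ω d) = fun ω => z ω a * (z ω b * (z ω c * z ω d))
      from funext fun ω => by ring]
    rw [h, hmean a]; ring
  have hE0 : ∀ i j : Fin p, i ≠ j → ∀ (m : ℕ),
      ∫ ω, z ω i ^ m * z ω j ∂P = 0 := by
    intro i j hij m
    have := h2 m 1 i j hij
    simp only [pow_one] at this
    rw [this, hmean j, mul_zero]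
  have hE22 : ∀ i j : Fin p, i ≠ j → ∫ ω, z ω i ^ 2 * z ω j ^ 2 ∂P = 1 := by
    intro i j hij; rw [h2 2 2 i j hij, hvar, hvar]; ring
  intro a b c d
  by_cases hab : a = b
  · subst hab
    by_cases hcd : c = d
    · subst hcd
      by_cases hac : a = c
      · subst hac
        rw [show (fun ω => z ω a * z ω a * z ω a * z ω a) = fun ω => z ω a ^ 4
          from funext fun ω => by ring, hkurt a]
        simp; ring
      · rw [show (fun ω => z ω a * z ω a * z ω c * z ω c) = fun ω => z ω a ^ 2 * z ω c ^ 2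
          from funext fun ω => by ring, hE22 a c hac]
        simp [hac]
    · by_cases hac : a = c
      · subst hac
        have had : a ≠ d := hcd
        rw [show (fun ω => z ω a * z ω a * z ω a * z ω d) = fun ω => z ω a ^ 3 * z ω d
          from funext fun ω => by ring, hE0 a d had 3]
        simp [hcd, had, had.symm]
      · by_cases had : a = d
        · subst had
          rw [show (fun ω => z ω a * z ω a * z ω c * z ω a) = fun ω => z ω a ^ 3 * z ω c
            from funext fun ω => by ring, hE0 a c hac 3]
          simp [hcd, hac, Ne.symm hac]
        · rw [show (fun ω => z ω a * z ω a * z ω c * z ω d) = fun ω => z ω a ^ 2 * (z ω c * z ω d)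
            from funext fun ω => by ring, h30 2 a c d hac had hcd]
          simp [hcd, hac, had]
  · by_cases hcd : c = d
    · subst hcd
      by_cases hac : a = c
      · subst hac
        rw [show (fun ω => z ω a * z ω b * z ω a * z ω a) = fun ω => z ω a ^ 3 * z ω b
          from funext fun ω => by ring, hE0 a b hab 3]
        simp [hab, Ne.symm hab, Ne.symm hab]
      · by_cases hbc : b = c
        · subst hbc
          rw [show (fun ω => z ω a * z ω b * z ω b * z ω b) = fun ω => z ω b ^ 3 * z ω a
            from funext fun ω => by ring, hE0 b a (Ne.symm hab) 3]
          simp [hab, hac]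
        · rw [show (fun ω => z ω a * z ω b * z ω c * z ω c) = fun ω => z ω c ^ 2 * (z ω a * z ω b)
            from funext fun ω => by ring,
            h30 2 c a b (Ne.symm hac) (Ne.symm hbc) hab]
          simp [hab, hac, hbc]
    · by_cases hac : a = c
      · subst hac
        by_cases hbd : b = d
        · subst hbd
          rw [show (fun ω => z ω a * z ω b * z ω a * z ω b) = fun ω => z ω a ^ 2 * z ω b ^ 2
            from funext fun ω => by ring, hE22 a b hab]
          simp [hab, hcd, Ne.symm hab]
        · rw [show (fun ω => z ω a * z ω b * z ω a * z ω d) = fun ω => z ω a ^ 2 * (z ω b * z ω d)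
            from funext fun ω => by ring, h30 2 a b d hab hcd hbd]
          simp [hab, hcd, hbd]
      · by_cases had : a = d
        · subst had
          by_cases hbc : b = c
          · subst hbc
            rw [show (fun ω => z ω a * z ω b * z ω b * z ω a) = fun ω => z ω a ^ 2 * z ω b ^ 2
              from funext fun ω => by ring, hE22 a b hab]
            simp [hab, hac, Ne.symm hcd]
          · rw [show (fun ω => z ω a * z ω b * z ω c * z ω a) = fun ω => z ω a ^ 2 * (z ω b * z ω c)
              from funext fun ω => by ring, h30 2 a b c hab hac hbc]
            simp [hab, hac, hbc]
        · by_cases hbc : b = c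
          · subst hbc
            have hbd : b ≠ d := fun h => hcd h
            rw [show (fun ω => z ω a * z ω b * z ω b * z ω d) = fun ω => z ω b ^ 2 * (z ω a * z ω d)
              from funext fun ω => by ring, h30 2 b a d (Ne.symm hab) hbd had]
            simp [hab, hac, had, hbd]
          · by_cases hbd : b = d
            · subst hbd
              rw [show (fun ω => z ω a * z ω b * z ω c * z ω b)
                  = fun ω => z ω b ^ 2 * (z ω a * z ω c)
                from funext fun ω => by ring, h30 2 b a c (Ne.symm hab) hbc hac]
              simp [hab, hac, had, hbc]
            · rw [h4 a b c d hab hac had hbc hbd hcd]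
              simp [hab, hac, had, hbc, hbd, hcd]

private lemma aux_expand
    {Ω : Type*} [MeasurableSpace Ω] (P : Measure Ω) [IsProbabilityMeasure P]
    (p : ℕ) (Δ : ℝ)
    (z : Ω → Fin p → ℝ)
    (hmeas : ∀ j, Measurable fun ω => z ω j)
    (hmom4 : ∀ j, Integrable (fun ω => z ω j ^ 4) P)
    (V : Matrix (Fin p) (Fin p) ℝ)
    (hmoment : ∀ a b c d : Fin p, ∫ ω, z ω a * z ω b * z ω c * z ω d ∂P =
      (if a = b then (1:ℝ) else 0) * (if c = d then 1 else 0)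
       + (if a = c then 1 else 0) * (if b = d then 1 else 0)
       + (if a = d then 1 else 0) * (if b = c then 1 else 0)
       + (if a = b ∧ a = c ∧ a = d then Δ else 0)) :
    ∫ ω, (∑ a, ∑ b, z ω a * V a b * z ω b) ^ 2 ∂P =
      ∑ a, ∑ b, ∑ c, ∑ d, V a b * V c d *
      ((if a = b then (1:ℝ) else 0) * (if c = d then 1 else 0)
       + (if a = c then 1 else 0) * (if b = d then 1 else 0)
       + (if a = d then 1 else 0) * (if b = c then 1 else 0)
       + (if a = b ∧ a = c ∧ a = d then Δ else 0)) := by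
  classical
  have hInt4 : ∀ a b c d : Fin p, Integrable (fun ω => z ω a * z ω b * z ω c * z ω d) P := by
    intro a b c d
    have hb : Integrable (fun ω => (z ω a ^ 4 + z ω b ^ 4 + z ω c ^ 4 + z ω d ^ 4) / 4) P :=
      ((((hmom4 a).add (hmom4 b)).add (hmom4 c)).add (hmom4 d)).div_const 4
    refine hb.mono' ?_ ?_
    · exact ((((hmeas a).mul (hmeas b)).mul (hmeas c)).mul (hmeas d)).aestronglyMeasurable
    · filter_upwards with ω
      have h1 := sq_nonneg (z ω a * z ω b - z ω c * z ω d)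
      have h2 := sq_nonneg (z ω a * z ω b + z ω c * z ω d)
      have h3 := sq_nonneg (z ω a ^ 2 - z ω b ^ 2)
      have h4 := sq_nonneg (z ω c ^ 2 - z ω d ^ 2)
      rw [Real.norm_eq_abs, abs_le]
      constructor <;> nlinarith
  have expand : ∀ ω, (∑ a, ∑ b, z ω a * V a b * z ω b) ^ 2 =
      ∑ q : Fin p × Fin p × Fin p × Fin p, V q.1 q.2.1 * V q.2.2.1 q.2.2.2 *
        (z ω q.1 * z ω q.2.1 * z ω q.2.2.1 * z ω q.2.2.2) := by
    intro ω
    rw [Fintype.sum_prod_type]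
    simp_rw [Fintype.sum_prod_type]
    rw [sq, Finset.sum_mul_sum]
    refine Finset.sum_congr rfl fun a _ => ?_
    have e : ∀ c, (∑ b, z ω a * V a b * z ω b) * (∑ d, z ω c * V c d * z ω d)
        = ∑ b, ∑ d, V a b * V c d * (z ω a * z ω b * z ω c * z ω d) := by
      intro c
      rw [Finset.sum_mul_sum]
      exact Finset.sum_congr rfl fun b _ => Finset.sum_congr rfl fun d _ => by ring
    simp_rw [e]
    rw [Finset.sum_comm]
  calc ∫ ω, (∑ a, ∑ b, z ω a * V a b * z ω b) ^ 2 ∂P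
      = ∫ ω, ∑ q : Fin p × Fin p × Fin p × Fin p, V q.1 q.2.1 * V q.2.2.1 q.2.2.2 *
        (z ω q.1 * z ω q.2.1 * z ω q.2.2.1 * z ω q.2.2.2) ∂P := by
        exact integral_congr_ae (Filter.Eventually.of_forall fun ω => expand ω)
    _ = ∑ q : Fin p × Fin p × Fin p × Fin p, ∫ ω, V q.1 q.2.1 * V q.2.2.1 q.2.2.2 *
        (z ω q.1 * z ω q.2.1 * z ω q.2.2.1 * z ω q.2.2.2) ∂P := by
        exact integral_finset_sum _ fun q _ => (hInt4 q.1 q.2.1 q.2.2.1 q.2.2.2).const_mul _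
    _ = _ := by
        simp_rw [integral_const_mul, hmoment]
        rw [Fintype.sum_prod_type]
        simp_rw [Fintype.sum_prod_type]

private lemma aux_algebra (p : ℕ) (Δ : ℝ) (V : Matrix (Fin p) (Fin p) ℝ) (hV : V.IsSymm) :
    ∑ a, ∑ b, ∑ c, ∑ d, V a b * V c d *
      ((if a = b then (1:ℝ) else 0) * (if c = d then 1 else 0)
       + (if a = c then 1 else 0) * (if b = d then 1 else 0)
       + (if a = d then 1 else 0) * (if b = c then 1 else 0)
       + (if a = b ∧ a = c ∧ a = d then Δ else 0)) =
    V.trace ^ 2 + 2 * (V * V).trace + Δ * ∑ j, V j j ^ 2 := by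
  have hsym : ∀ a b, V b a = V a b := hV.apply
  simp only [mul_add, Finset.sum_add_distrib, mul_ite, ite_mul, mul_one, mul_zero, zero_mul,
    one_mul, ite_and]
  simp [Finset.sum_ite_eq, Finset.sum_ite_eq', Matrix.trace, Matrix.diag, Matrix.mul_apply,
    Finset.mul_sum, Finset.sum_mul, sq, hsym]
  ring_nf
  rw [Finset.sum_comm (f := fun x x_1 => V x x * V x_1 x_1)]
  simp [Finset.mul_sum, Finset.sum_mul, mul_comm, mul_assoc, mul_left_comm]

/-- If `z = (z₁, …, z_p)` has independent coordinates with `E[z_j] = 0`,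
`E[z_j²] = 1`, `E[z_j⁴] = 3 + Δ` (finite fourth moments) and `V` is a real
symmetric `p×p` matrix, then `E[(zᵀVz)²] = tr(V)² + 2 tr(V²) + Δ Σ_j V_jj²`. -/
theorem second_moment_quadratic_form
    {Ω : Type*} [MeasurableSpace Ω] (P : Measure Ω) [IsProbabilityMeasure P]
    (p : ℕ) (Δ : ℝ)
    (z : Ω → Fin p → ℝ)
    (hmeas : ∀ j, Measurable fun ω => z ω j)
    (hindep : iIndepFun (fun j ω => z ω j) P)
    (hmom4 : ∀ j, Integrable (fun ω => z ω j ^ 4) P)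
    (hmean : ∀ j, ∫ ω, z ω j ∂P = 0)
    (hvar : ∀ j, ∫ ω, z ω j ^ 2 ∂P = 1)
    (hkurt : ∀ j, ∫ ω, z ω j ^ 4 ∂P = 3 + Δ)
    (V : Matrix (Fin p) (Fin p) ℝ) (hV : V.IsSymm) :
    ∫ ω, (∑ a, ∑ b, z ω a * V a b * z ω b) ^ 2 ∂P =
      V.trace ^ 2 + 2 * (V * V).trace + Δ * ∑ j, V j j ^ 2 := by
  rw [aux_expand P p Δ z hmeas hmom4 V
    (aux_hmoment P p Δ z hmean hvar hkurt (aux_hprod P hmeas hindep))]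
  exact aux_algebra p Δ V hV
end

section
/- Let z = (z₁, …, z_p) be a random vector with independent coordinates satisfying E[z_j] = 0, E[z_j²] = 1, E[z_j⁴] = 3 + Δ with Δ ≥ −1, and finite eighth moments, and suppose there is a constant C ≥ 0 such that E[(zᵀVz − tr(V))⁴] ≤ C·(tr(V²))² for every real symmetric p×p matrix V. Let Γ be a K×p real matrix, set φ = Γz and Σ = ΓΓᵀ, and let u be the random vector indexed by pairs (a,b) ∈ {1,…,K}² with u_{(a,b)} = φ_a·φ_b − Σ_{ab}. Then for every q and every real q×K² matrix B, E[‖Bu‖⁴] ≤ C·(E[‖Bu‖²])². -/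
open MeasureTheory ProbabilityTheory Finset Matrix
open scoped ENNReal NNReal

section AuxFactorModel

variable {Ω : Type*} [MeasurableSpace Ω] {P : Measure Ω} [IsProbabilityMeasure P] {p : ℕ}
  {z : Ω → Fin p → ℝ}

lemma aux_prod (hmeas : ∀ j, Measurable fun ω => z ω j)
    (hindep : iIndepFun (fun j ω => z ω j) P)
    (g : Fin p → ℝ → ℝ) (hg : ∀ j, Measurable (g j))
    (hgi : ∀ j, Integrable (fun ω => g j (z ω j)) P) (s : Finset (Fin p)) :
    Integrable (fun ω => ∏ j ∈ s, g j (z ω j)) P ∧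
      ∫ ω, ∏ j ∈ s, g j (z ω j) ∂P = ∏ j ∈ s, ∫ ω, g j (z ω j) ∂P := by
  classical
  have hcomp : iIndepFun (fun j ω => g j (z ω j)) P :=
    hindep.comp (fun j => g j) hg
  have hFmeas : ∀ j, Measurable fun ω => g j (z ω j) := fun j => (hg j).comp (hmeas j)
  induction s using Finset.induction_on with
  | empty => simp
  | @insert a s ha ih =>
    have hind : IndepFun (fun ω => ∏ j ∈ s, g j (z ω j)) (fun ω => g a (z ω a)) P := by
      have := hcomp.indepFun_finset_prod_of_notMem hFmeas ha
      have hpe : (∏ j ∈ s, fun ω => g j (z ω j)) = fun ω => ∏ j ∈ s, g j (z ω j) := by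
        funext ω; simp
      rwa [hpe] at this
    have h1 : Integrable (fun ω => g a (z ω a)) P := hgi a
    have heq : (fun ω => ∏ j ∈ insert a s, g j (z ω j))
        = fun ω => (∏ j ∈ s, g j (z ω j)) * g a (z ω a) := by
      funext ω; rw [Finset.prod_insert ha]; ring
    constructor
    · rw [heq]
      exact hind.integrable_mul ih.1 h1
    · rw [heq, Finset.prod_insert ha]
      rw [hind.integral_fun_mul_eq_mul_integral ih.1.1 h1.1, ih.2]
      ring

lemma aux_pow_int (hmeas : ∀ j, Measurable fun ω => z ω j)
    (hmom8 : ∀ j, Integrable (fun ω => z ω j ^ 8) P)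
    (j : Fin p) (k : ℕ) (hk : k ≤ 8) : Integrable (fun ω => z ω j ^ k) P := by
  have hbnd : ∀ ω, ‖z ω j ^ k‖ ≤ 1 + z ω j ^ 8 := by
    intro ω
    rcases le_or_gt (|z ω j|) 1 with h | h
    · have : ‖z ω j ^ k‖ ≤ 1 := by
        rw [norm_pow, Real.norm_eq_abs]
        exact pow_le_one₀ (abs_nonneg _) h
      nlinarith [pow_nonneg (pow_nonneg (sq_nonneg (z ω j)) 2) 2, sq_nonneg (z ω j ^ 4)]
    · have h1 : ‖z ω j ^ k‖ = |z ω j| ^ k := by rw [norm_pow, Real.norm_eq_abs]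
      have h2 : |z ω j| ^ k ≤ |z ω j| ^ 8 := pow_le_pow_right₀ h.le hk
      have h3 : |z ω j| ^ 8 = z ω j ^ 8 := by
        rw [← abs_pow, abs_of_nonneg]; positivity
      rw [h1]; nlinarith
  exact Integrable.mono' ((integrable_const 1).add (hmom8 j))
    ((hmeas j).pow_const k).aestronglyMeasurable (Filter.Eventually.of_forall hbnd)

end AuxFactorModel

def cnt4 {α : Type*} [DecidableEq α] (i j k l m : α) : ℕ :=
  (if m = i then 1 else 0) + (if m = j then 1 else 0)
    + (if m = k then 1 else 0) + (if m = l then 1 else 0)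

lemma aux_prod_cnt {α : Type*} [Fintype α] [DecidableEq α] (Δ : ℝ) (F : α → ℕ → ℝ)
    (h0 : ∀ m, F m 0 = 1) (h1 : ∀ m, F m 1 = 0) (h2 : ∀ m, F m 2 = 1)
    (h4 : ∀ m, F m 4 = 3 + Δ) (i j k l : α) :
    ∏ m, F m (cnt4 i j k l m) =
      (if i = j then if k = l then (1:ℝ) else 0 else 0)
      + (if i = k then if j = l then 1 else 0 else 0)
      + (if i = l then if j = k then 1 else 0 else 0)
      + (if i = j ∧ i = k ∧ i = l then Δ else 0) := by
  classical
  have zero_of : ∀ b : α, cnt4 i j k l b = 1 → ∏ m, F m (cnt4 i j k l m) = 0 := by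
    intro b hb
    exact Finset.prod_eq_zero (Finset.mem_univ b) (by rw [hb]; exact h1 b)
  have pair : ∀ a b : α, a ≠ b → cnt4 i j k l a = 2 → cnt4 i j k l b = 2 →
      (∀ m, m ≠ a → m ≠ b → cnt4 i j k l m = 0) → ∏ m, F m (cnt4 i j k l m) = 1 := by
    intro a b hab h2a h2b hout
    have hsub : ∏ m ∈ ({a, b} : Finset α), F m (cnt4 i j k l m)
        = ∏ m, F m (cnt4 i j k l m) :=
      Finset.prod_subset (Finset.subset_univ _) (fun x _ hx => by
        have hxa : x ≠ a := fun h => hx (by simp [h])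
        have hxb : x ≠ b := fun h => hx (by simp [h])
        rw [hout x hxa hxb]; exact h0 x)
    rw [← hsub, Finset.prod_pair hab, h2a, h2b, h2 a, h2 b, mul_one]
  by_cases hij : i = j
  · subst hij
    by_cases hik : i = k
    · subst hik
      by_cases hil : i = l
      · subst hil
        rw [Finset.prod_eq_single_of_mem i (Finset.mem_univ i)
          (fun b _ hb => by simp [cnt4, hb]; exact h0 b)]
        · simp [cnt4, h4 i]; ring
      · rw [zero_of l (by simp [cnt4, Ne.symm hil])]
        simp [hil]
    · by_cases hil : i = l
      · subst hil
        rw [zero_of k (by simp [cnt4, Ne.symm hik])]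
        simp [hik, Ne.symm hik]
      · by_cases hkl : k = l
        · subst hkl
          rw [pair i k hik (by simp [cnt4, hik]) (by simp [cnt4, Ne.symm hik])
            (fun m hma hmb => by simp [cnt4, hma, hmb])]
          simp [hik]
        · rw [zero_of k (by simp [cnt4, Ne.symm hik, hkl])]
          simp [hik, hil, hkl]
  · by_cases hkl : k = l
    · subst hkl
      by_cases hik : i = k
      · subst hik
        rw [zero_of j (by simp [cnt4, Ne.symm hij])]
        simp [hij, Ne.symm hij]
      · by_cases hjk : j = k
        · subst hjk
          rw [zero_of i (by simp [cnt4, hij, hik])]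
          simp [hij, hik]
        · rw [zero_of i (by simp [cnt4, hij, hik])]
          simp [hij, hik]
    · by_cases hik : i = k
      · subst hik
        by_cases hjl : j = l
        · subst hjl
          rw [pair i j (fun h => hij h) (by simp [cnt4, hij, fun h => hkl h])
            (by simp [cnt4, Ne.symm hij, Ne.symm (fun h => hkl h)])
            (fun m hma hmb => by simp [cnt4, hma, hmb])]
          simp [hij, hkl]
        · rw [zero_of j (by simp [cnt4, Ne.symm hij, hjl])]
          simp [hij, hjl, hkl]
      · by_cases hil : i = l
        · subst hil
          by_cases hjk : j = k
          · subst hjk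
            rw [pair i j (fun h => hij h) (by simp [cnt4, hij, hik])
              (by simp [cnt4, Ne.symm hij, Ne.symm hik])
              (fun m hma hmb => by simp [cnt4, hma, hmb])]
            simp [hij, hik]
          · rw [zero_of j (by simp [cnt4, Ne.symm hij, hjk])]
            simp [hij, hik, hjk]
        · rw [zero_of i (by simp [cnt4, hij, hik, hil])]
          simp [hij, hik, hil]

lemma aux_e1 {n : ℕ} (V : Matrix (Fin n) (Fin n) ℝ) :
    ∑ a, ∑ c, ∑ b, ∑ d, (V a b * V c d *
      (if a = b then if c = d then (1:ℝ) else 0 else 0)) = (∑ a, V a a) ^ 2 := by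
  simp [mul_ite, ite_mul, Finset.sum_ite_eq, Finset.sum_ite_eq', sq, Finset.sum_mul, Finset.mul_sum]
  rw [Finset.sum_comm]

lemma aux_e2 {n : ℕ} (V : Matrix (Fin n) (Fin n) ℝ) :
    ∑ a, ∑ c, ∑ b, ∑ d, (V a b * V c d *
      (if a = c then if b = d then (1:ℝ) else 0 else 0)) = ∑ a, ∑ b, V a b * V a b := by
  simp [mul_ite, ite_mul, Finset.sum_ite_eq, Finset.sum_ite_eq']

lemma aux_e3 {n : ℕ} (V : Matrix (Fin n) (Fin n) ℝ) :
    ∑ a, ∑ c, ∑ b, ∑ d, (V a b * V c d *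
      (if a = d then if b = c then (1:ℝ) else 0 else 0)) = ∑ a, ∑ b, V a b * V b a := by
  simp [mul_ite, ite_mul, Finset.sum_ite_eq, Finset.sum_ite_eq']

lemma aux_e4 {n : ℕ} (V : Matrix (Fin n) (Fin n) ℝ) (Δ : ℝ) :
    ∑ a, ∑ c, ∑ b, ∑ d, (V a b * V c d *
      (if a = b ∧ a = c ∧ a = d then Δ else 0)) = Δ * ∑ a, V a a * V a a := by
  simp [ite_and, mul_ite, ite_mul, Finset.sum_ite_eq, Finset.sum_ite_eq', Finset.mul_sum]
  exact Finset.sum_congr rfl fun i _ => by ring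

lemma aux_sum_eval {n : ℕ} (V : Matrix (Fin n) (Fin n) ℝ) (Δ : ℝ) :
    ∑ a, ∑ c, ∑ b, ∑ d, (V a b * V c d *
      ((if a = b then if c = d then (1:ℝ) else 0 else 0)
        + (if a = c then if b = d then 1 else 0 else 0)
        + (if a = d then if b = c then 1 else 0 else 0)
        + (if a = b ∧ a = c ∧ a = d then Δ else 0))) =
      (∑ a, V a a) ^ 2 + (∑ a, ∑ b, V a b * V a b) + (∑ a, ∑ b, V a b * V b a)
        + Δ * ∑ a, V a a * V a a := by
  have : ∀ a c b d : Fin n, V a b * V c d *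
      ((if a = b then if c = d then (1:ℝ) else 0 else 0)
        + (if a = c then if b = d then 1 else 0 else 0)
        + (if a = d then if b = c then 1 else 0 else 0)
        + (if a = b ∧ a = c ∧ a = d then Δ else 0)) =
      V a b * V c d * (if a = b then if c = d then (1:ℝ) else 0 else 0)
        + V a b * V c d * (if a = c then if b = d then 1 else 0 else 0)
        + V a b * V c d * (if a = d then if b = c then 1 else 0 else 0)
        + V a b * V c d * (if a = b ∧ a = c ∧ a = d then Δ else 0) := by
    intro a c b d; ring
  simp only [this, Finset.sum_add_distrib]
  rw [aux_e1, aux_e2, aux_e3, aux_e4]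


section Aux2
variable {Ω : Type*} [MeasurableSpace Ω] {P : Measure Ω} [IsProbabilityMeasure P] {p : ℕ}
  {z : Ω → Fin p → ℝ}

lemma aux_four (hmeas : ∀ j, Measurable fun ω => z ω j)
    (hindep : iIndepFun (fun j ω => z ω j) P)
    (hmom8 : ∀ j, Integrable (fun ω => z ω j ^ 8) P)
    (hmean : ∀ j, ∫ ω, z ω j ∂P = 0)
    (hvar : ∀ j, ∫ ω, z ω j ^ 2 ∂P = 1)
    {Δ : ℝ} (hkurt : ∀ j, ∫ ω, z ω j ^ 4 ∂P = 3 + Δ)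
    (i j k l : Fin p) :
    Integrable (fun ω => z ω i * z ω j * z ω k * z ω l) P ∧
    ∫ ω, z ω i * z ω j * z ω k * z ω l ∂P =
      (if i = j then if k = l then (1:ℝ) else 0 else 0)
      + (if i = k then if j = l then 1 else 0 else 0)
      + (if i = l then if j = k then 1 else 0 else 0)
      + (if i = j ∧ i = k ∧ i = l then Δ else 0) := by
  classical
  have hle : ∀ m, cnt4 i j k l m ≤ 8 := by
    intro m; unfold cnt4; split_ifs <;> norm_num
  have hgi : ∀ m, Integrable (fun ω => z ω m ^ cnt4 i j k l m) P :=
    fun m => aux_pow_int hmeas hmom8 m _ (hle m)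
  obtain ⟨hI, hE⟩ := aux_prod hmeas hindep (fun m t => t ^ cnt4 i j k l m)
    (fun m => measurable_id.pow_const _) hgi Finset.univ
  have hrep : (fun ω => z ω i * z ω j * z ω k * z ω l)
      = fun ω => ∏ m, z ω m ^ cnt4 i j k l m := by
    funext ω
    simp only [cnt4, pow_add, Finset.prod_mul_distrib, pow_ite, pow_one, pow_zero,
      Finset.prod_ite_eq', Finset.mem_univ, if_true]
  refine ⟨hrep ▸ hI, ?_⟩
  rw [hrep, hE]
  exact aux_prod_cnt Δ (fun m n => ∫ ω, z ω m ^ n ∂P)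
    (fun m => by simp) (fun m => by simpa using hmean m) hvar hkurt i j k l

lemma aux_two (hmeas : ∀ j, Measurable fun ω => z ω j)
    (hindep : iIndepFun (fun j ω => z ω j) P)
    (hmom8 : ∀ j, Integrable (fun ω => z ω j ^ 8) P)
    (hmean : ∀ j, ∫ ω, z ω j ∂P = 0)
    (hvar : ∀ j, ∫ ω, z ω j ^ 2 ∂P = 1)
    (i j : Fin p) :
    Integrable (fun ω => z ω i * z ω j) P ∧
    ∫ ω, z ω i * z ω j ∂P = if i = j then (1:ℝ) else 0 := by
  classical
  by_cases hij : i = j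
  · subst hij
    have : (fun ω => z ω i * z ω i) = fun ω => z ω i ^ 2 := by funext ω; ring
    rw [this, if_pos rfl]
    exact ⟨aux_pow_int hmeas hmom8 i 2 (by norm_num), hvar i⟩
  · have hind : IndepFun (fun ω => z ω i) (fun ω => z ω j) P := hindep.indepFun hij
    have h1 : Integrable (fun ω => z ω i) P := by
      simpa using aux_pow_int hmeas hmom8 i 1 (by norm_num)
    have h2 : Integrable (fun ω => z ω j) P := by
      simpa using aux_pow_int hmeas hmom8 j 1 (by norm_num)
    refine ⟨hind.integrable_mul h1 h2, ?_⟩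
    rw [if_neg hij, hind.integral_fun_mul_eq_mul_integral h1.1 h2.1, hmean i, zero_mul]
end Aux2

section AuxSecond
variable {Ω : Type*} [MeasurableSpace Ω] {P : Measure Ω} [IsProbabilityMeasure P] {p : ℕ}
  {z : Ω → Fin p → ℝ}

lemma aux_second (hmeas : ∀ j, Measurable fun ω => z ω j)
    (hindep : iIndepFun (fun j ω => z ω j) P)
    (hmom8 : ∀ j, Integrable (fun ω => z ω j ^ 8) P)
    (hmean : ∀ j, ∫ ω, z ω j ∂P = 0)
    (hvar : ∀ j, ∫ ω, z ω j ^ 2 ∂P = 1)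
    {Δ : ℝ} (hkurt : ∀ j, ∫ ω, z ω j ^ 4 ∂P = 3 + Δ) (hΔ : -1 ≤ Δ)
    (V : Matrix (Fin p) (Fin p) ℝ) (hV : V.IsSymm) :
    Integrable (fun ω => ((∑ a, ∑ b, z ω a * V a b * z ω b) - V.trace) ^ 2) P ∧
    0 ≤ (V * V).trace ∧
    (V * V).trace ≤ ∫ ω, ((∑ a, ∑ b, z ω a * V a b * z ω b) - V.trace) ^ 2 ∂P := by
  classical
  set Q : Ω → ℝ := fun ω => ∑ a, ∑ b, z ω a * V a b * z ω b with hQdef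
  have hsymm : ∀ a b, V b a = V a b := fun a b => hV.apply a b
  -- basic integrability
  have hterm : ∀ a b, Integrable (fun ω => z ω a * V a b * z ω b) P := by
    intro a b
    have h : (fun ω => z ω a * V a b * z ω b) = fun ω => V a b * (z ω a * z ω b) := by
      funext ω; ring
    rw [h]; exact (aux_two hmeas hindep hmom8 hmean hvar a b).1.const_mul _
  have hQint : Integrable Q P :=
    integrable_finset_sum _ fun a _ => integrable_finset_sum _ fun b _ => hterm a b
  -- expansion of Q^2
  have hterm4 : ∀ a b c d, Integrable
      (fun ω => V a b * V c d * (z ω a * z ω b * z ω c * z ω d)) P := by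
    intro a b c d
    exact (aux_four hmeas hindep hmom8 hmean hvar hkurt a b c d).1.const_mul _
  have hQ2 : (fun ω => Q ω ^ 2)
      = fun ω => ∑ a, ∑ c, ∑ b, ∑ d, V a b * V c d * (z ω a * z ω b * z ω c * z ω d) := by
    funext ω
    rw [hQdef]
    simp only [sq]
    rw [Finset.sum_mul_sum]
    refine Finset.sum_congr rfl fun a _ => Finset.sum_congr rfl fun c _ => ?_
    rw [Finset.sum_mul_sum]
    exact Finset.sum_congr rfl fun b _ => Finset.sum_congr rfl fun d _ => by ring
  have hQ2int : Integrable (fun ω => Q ω ^ 2) P := by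
    rw [hQ2]
    exact integrable_finset_sum _ fun a _ => integrable_finset_sum _ fun c _ =>
      integrable_finset_sum _ fun b _ => integrable_finset_sum _ fun d _ => hterm4 a b c d
  -- integral of Q
  have hIQ : ∫ ω, Q ω ∂P = V.trace := by
    rw [hQdef]
    rw [integral_finset_sum _ fun a _ => integrable_finset_sum _ fun b _ => hterm a b]
    have : ∀ a : Fin p, ∫ ω, ∑ b, z ω a * V a b * z ω b ∂P = V a a := by
      intro a
      rw [integral_finset_sum _ fun b _ => hterm a b]
      have h2 : ∀ b : Fin p, ∫ ω, z ω a * V a b * z ω b ∂P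
          = V a b * (if a = b then 1 else 0) := by
        intro b
        have h : (fun ω => z ω a * V a b * z ω b) = fun ω => V a b * (z ω a * z ω b) := by
          funext ω; ring
        rw [h, integral_const_mul _ _, (aux_two hmeas hindep hmom8 hmean hvar a b).2]
      simp only [h2]
      simp [Finset.sum_ite_eq, mul_ite]
    simp only [this]
    simp [Matrix.trace, Matrix.diag]
  -- integral of Q^2
  have hIQ2 : ∫ ω, Q ω ^ 2 ∂P = V.trace ^ 2 + (∑ a, ∑ b, V a b * V a b)
      + (∑ a, ∑ b, V a b * V b a) + Δ * ∑ a, V a a * V a a := by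
    rw [hQ2]
    rw [integral_finset_sum _ fun a _ => integrable_finset_sum _ fun c _ =>
      integrable_finset_sum _ fun b _ => integrable_finset_sum _ fun d _ => hterm4 a b c d]
    have step : ∀ a : Fin p,
        ∫ ω, ∑ c, ∑ b, ∑ d, V a b * V c d * (z ω a * z ω b * z ω c * z ω d) ∂P
        = ∑ c, ∑ b, ∑ d, (V a b * V c d *
          ((if a = b then if c = d then (1:ℝ) else 0 else 0)
            + (if a = c then if b = d then 1 else 0 else 0)
            + (if a = d then if b = c then 1 else 0 else 0)
            + (if a = b ∧ a = c ∧ a = d then Δ else 0))) := by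
      intro a
      rw [integral_finset_sum _ fun c _ => integrable_finset_sum _ fun b _ =>
        integrable_finset_sum _ fun d _ => hterm4 a b c d]
      refine Finset.sum_congr rfl fun c _ => ?_
      rw [integral_finset_sum _ fun b _ => integrable_finset_sum _ fun d _ => hterm4 a b c d]
      refine Finset.sum_congr rfl fun b _ => ?_
      rw [integral_finset_sum _ fun d _ => hterm4 a b c d]
      refine Finset.sum_congr rfl fun d _ => ?_
      rw [integral_const_mul _ _, (aux_four hmeas hindep hmom8 hmean hvar hkurt a b c d).2]
    simp only [step]
    rw [aux_sum_eval V Δ]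
    have htr : V.trace = ∑ a, V a a := by simp [Matrix.trace, Matrix.diag]
    rw [htr]
  -- expand (Q - trace)^2
  have hSexp : (fun ω => (Q ω - V.trace) ^ 2)
      = fun ω => Q ω ^ 2 - 2 * V.trace * Q ω + V.trace ^ 2 := by
    funext ω; ring
  have hS2int : Integrable (fun ω => (Q ω - V.trace) ^ 2) P := by
    rw [hSexp]
    exact (hQ2int.sub (hQint.const_mul _)).add (integrable_const _)
  have hIS2 : ∫ ω, (Q ω - V.trace) ^ 2 ∂P = (∑ a, ∑ b, V a b * V a b)
      + (∑ a, ∑ b, V a b * V b a) + Δ * ∑ a, V a a * V a a := by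
    rw [hSexp]
    have hsub : Integrable (fun ω => Q ω ^ 2 - 2 * V.trace * Q ω) P :=
      hQ2int.sub (hQint.const_mul (2 * V.trace))
    rw [integral_add hsub (integrable_const _),
      integral_sub hQ2int (hQint.const_mul (2 * V.trace)), integral_const_mul _ _, hIQ, hIQ2,
      integral_const]
    simp [measure_univ]
    ring
  -- trace of V*V
  have htrVV : (V * V).trace = ∑ a, ∑ b, V a b * V b a := by
    simp [Matrix.trace, Matrix.diag, Matrix.mul_apply]
  have hTnonneg : ∀ a b : Fin p, 0 ≤ V a b * V b a := by
    intro a b; rw [hsymm a b]; exact mul_self_nonneg _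
  have hD_le_T : (∑ a, V a a * V a a) ≤ ∑ a, ∑ b, V a b * V b a := by
    refine Finset.sum_le_sum fun a _ => ?_
    exact Finset.single_le_sum (fun b _ => hTnonneg a b) (Finset.mem_univ a)
  have hDnonneg : 0 ≤ ∑ a, V a a * V a a :=
    Finset.sum_nonneg fun a _ => mul_self_nonneg _
  have hEq : (∑ a, ∑ b, V a b * V a b) = ∑ a, ∑ b, V a b * V b a := by
    refine Finset.sum_congr rfl fun a _ => Finset.sum_congr rfl fun b _ => ?_
    rw [hsymm a b]
  refine ⟨hS2int, ?_, ?_⟩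
  · rw [htrVV]
    exact Finset.sum_nonneg fun a _ => Finset.sum_nonneg fun b _ => hTnonneg a b
  · rw [hIS2, htrVV, hEq]
    nlinarith [hD_le_T, hDnonneg, hΔ]
end AuxSecond

lemma aux_repr {p K q : ℕ} (Γ : Matrix (Fin K) (Fin p) ℝ)
    (B : Matrix (Fin q) (Fin K × Fin K) ℝ) (ℓ : Fin q) :
    ∃ V : Matrix (Fin p) (Fin p) ℝ, V.IsSymm ∧ ∀ zv : Fin p → ℝ,
      B.mulVec (fun ab => Γ.mulVec zv ab.1 * Γ.mulVec zv ab.2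
        - (Γ * Γ.transpose) ab.1 ab.2) ℓ
      = (∑ a, ∑ b, zv a * V a b * zv b) - V.trace := by
  classical
  set A : Matrix (Fin K) (Fin K) ℝ := Matrix.of fun a b => B ℓ (a, b) with hA
  set M : Matrix (Fin K) (Fin K) ℝ := ((1:ℝ)/2) • (A + A.transpose) with hM
  have hMsymm : M.IsSymm := by
    unfold Matrix.IsSymm
    rw [hM, Matrix.transpose_smul, Matrix.transpose_add, Matrix.transpose_transpose, add_comm]
  refine ⟨Γ.transpose * M * Γ, ?_, ?_⟩
  · unfold Matrix.IsSymm
    rw [Matrix.transpose_mul, Matrix.transpose_mul, Matrix.transpose_transpose, hMsymm,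
      Matrix.mul_assoc]
  intro zv
  set φv : Fin K → ℝ := Γ.mulVec zv with hφv
  -- symmetrization identity
  have hMsum : ∀ G : Fin K → Fin K → ℝ, (∀ a b, G b a = G a b) →
      ∑ a, ∑ b, M a b * G a b = ∑ a, ∑ b, A a b * G a b := by
    intro G hG
    have h1 : ∑ a, ∑ b, A.transpose a b * G a b = ∑ a, ∑ b, A a b * G a b := by
      rw [Finset.sum_comm]
      exact Finset.sum_congr rfl fun a _ => Finset.sum_congr rfl fun b _ => by
        rw [Matrix.transpose_apply, hG]
    have h2 : ∀ a b : Fin K, M a b * G a b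
        = (1:ℝ)/2 * (A a b * G a b) + (1:ℝ)/2 * (A.transpose a b * G a b) := by
      intro a b
      rw [hM]
      simp [Matrix.smul_apply, Matrix.add_apply]
      ring
    simp only [h2, Finset.sum_add_distrib, ← Finset.mul_sum]
    rw [h1]; ring
  -- quadratic form equals sum over pairs of M
  have hquadform : ∑ a, ∑ b, zv a * (Γ.transpose * M * Γ) a b * zv b
      = ∑ a, ∑ b, M a b * (φv a * φv b) := by
    have e1 : ∑ a, ∑ b, zv a * (Γ.transpose * M * Γ) a b * zv b
        = zv ⬝ᵥ (Γ.transpose * M * Γ).mulVec zv := by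
      simp [dotProduct, Matrix.mulVec, Finset.mul_sum, mul_assoc]
    have e2 : zv ⬝ᵥ (Γ.transpose * M * Γ).mulVec zv = φv ⬝ᵥ M.mulVec φv := by
      rw [Matrix.mul_assoc, ← Matrix.mulVec_mulVec, Matrix.dotProduct_mulVec,
        Matrix.vecMul_transpose, Matrix.mulVec_mulVec, hφv]
    have e3 : φv ⬝ᵥ M.mulVec φv = ∑ a, ∑ b, M a b * (φv a * φv b) := by
      simp [dotProduct, Matrix.mulVec, Finset.mul_sum]
      exact Finset.sum_congr rfl fun a _ => Finset.sum_congr rfl fun b _ => by ring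
    rw [e1, e2, e3]
  -- trace equals sum over pairs of M with Sig
  have htrace : (Γ.transpose * M * Γ).trace = ∑ a, ∑ b, M a b * (Γ * Γ.transpose) a b := by
    rw [Matrix.trace_mul_comm, ← Matrix.mul_assoc]
    simp [Matrix.trace, Matrix.diag, Matrix.mul_apply]
    rw [Finset.sum_comm]
    refine Finset.sum_congr rfl fun a _ => Finset.sum_congr rfl fun b _ => ?_
    rw [Finset.mul_sum, Finset.sum_mul]
    exact Finset.sum_congr rfl fun x _ => by ring
  have hSigsymm : ∀ a b : Fin K, (Γ * Γ.transpose) b a = (Γ * Γ.transpose) a b := by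
    intro a b
    simp [Matrix.mul_apply, mul_comm]
  have hφsymm : ∀ a b : Fin K, φv b * φv a = φv a * φv b := fun a b => mul_comm _ _
  -- left side expansion
  have hlhs : B.mulVec (fun ab => Γ.mulVec zv ab.1 * Γ.mulVec zv ab.2
      - (Γ * Γ.transpose) ab.1 ab.2) ℓ
      = ∑ a, ∑ b, A a b * (φv a * φv b - (Γ * Γ.transpose) a b) := by
    simp only [Matrix.mulVec, dotProduct]
    rw [Fintype.sum_prod_type]
    exact Finset.sum_congr rfl fun a _ => Finset.sum_congr rfl fun b _ => by
      simp [hA, hφv, Matrix.mulVec, dotProduct]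
  rw [hlhs, hquadform, htrace, hMsum _ hφsymm, hMsum _ hSigsymm]
  simp only [mul_sub, Finset.sum_sub_distrib]

section A4
variable {Ω : Type*} [MeasurableSpace Ω] {P : Measure Ω} [IsProbabilityMeasure P]

lemma aux_mul_memLp {f g : Ω → ℝ} {q r s : ℝ≥0∞} (hf : MemLp f q P) (hg : MemLp g r P)
    (h : 1/s = 1/q + 1/r) : MemLp (fun ω => f ω * g ω) s P := by
  haveI : ENNReal.HolderTriple q r s := ⟨by simpa only [one_div] using h.symm⟩
  have := MemLp.smul (f := g) (φ := f) (r := s) hg hf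
  exact this

lemma aux_z_memLp8 {p : ℕ} {z : Ω → Fin p → ℝ} (hmeas : ∀ j, Measurable fun ω => z ω j)
    (hmom8 : ∀ j, Integrable (fun ω => z ω j ^ 8) P) (j : Fin p) :
    MemLp (fun ω => z ω j) 8 P := by
  refine (memLp_norm_rpow_iff (p := 8) (q := 8) (hmeas j).aestronglyMeasurable
    (by norm_num) (by norm_num)).1 ?_
  have heq : (fun ω => ‖z ω j‖ ^ (8 : ℝ≥0∞).toReal) = fun ω => z ω j ^ 8 := by
    funext ω
    rw [show (8 : ℝ≥0∞).toReal = ((8:ℕ):ℝ) by norm_num, Real.rpow_natCast, Real.norm_eq_abs,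
      ← abs_pow, abs_of_nonneg (by positivity)]
  rw [heq, show (8:ℝ≥0∞)/8 = 1 from ENNReal.div_self (by norm_num) (by norm_num),
    memLp_one_iff_integrable]
  exact hmom8 j

-- Cauchy-Schwarz for squares
lemma aux_cs {x y : Ω → ℝ} (hx : MemLp x 4 P) (hy : MemLp y 4 P) :
    ∫ ω, x ω ^ 2 * y ω ^ 2 ∂P
      ≤ Real.sqrt (∫ ω, x ω ^ 4 ∂P) * Real.sqrt (∫ ω, y ω ^ 4 ∂P) := by
  have hx2 : MemLp (fun ω => x ω ^ 2) 2 P := by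
    have := aux_mul_memLp hx hx (s := 2) (by
      rw [ENNReal.div_add_div_same, ENNReal.div_eq_div_iff (by norm_num) (by norm_num)
        (by norm_num) (by norm_num)]
      norm_num)
    simpa [pow_two] using this
  have hy2 : MemLp (fun ω => y ω ^ 2) 2 P := by
    have := aux_mul_memLp hy hy (s := 2) (by
      rw [ENNReal.div_add_div_same, ENNReal.div_eq_div_iff (by norm_num) (by norm_num)
        (by norm_num) (by norm_num)]
      norm_num)
    simpa [pow_two] using this
  have hconj : Real.HolderConjugate 2 2 := Real.HolderConjugate.two_two
  have h := integral_mul_le_Lp_mul_Lq_of_nonneg hconj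
    (f := fun ω => x ω ^ 2) (g := fun ω => y ω ^ 2)
    (Filter.Eventually.of_forall fun ω => sq_nonneg _)
    (Filter.Eventually.of_forall fun ω => sq_nonneg _)
    (by rw [show ENNReal.ofReal 2 = 2 by norm_num]; exact hx2)
    (by rw [show ENNReal.ofReal 2 = 2 by norm_num]; exact hy2)
  have hpow : ∀ t : ℝ, (t ^ 2 : ℝ) ^ (2:ℝ) = t ^ 4 := by
    intro t
    rw [show (2:ℝ) = ((2:ℕ):ℝ) by norm_num, Real.rpow_natCast]
    ring
  simp only [hpow] at h
  have hs : ∀ c : ℝ, 0 ≤ c → c ^ (1/2 : ℝ) = Real.sqrt c := by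
    intro c hc
    rw [Real.sqrt_eq_rpow]
  have h4x : 0 ≤ ∫ ω, x ω ^ 4 ∂P := integral_nonneg fun ω => by positivity
  have h4y : 0 ≤ ∫ ω, y ω ^ 4 ∂P := integral_nonneg fun ω => by positivity
  rw [hs _ h4x, hs _ h4y] at h
  exact h

lemma aux_sq_int {x y : Ω → ℝ} (hx : MemLp x 4 P) (hy : MemLp y 4 P) :
    Integrable (fun ω => x ω ^ 2 * y ω ^ 2) P := by
  have hx2 : MemLp (fun ω => x ω ^ 2) 2 P := by
    have := aux_mul_memLp hx hx (s := 2) (by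
      rw [ENNReal.div_add_div_same, ENNReal.div_eq_div_iff (by norm_num) (by norm_num)
        (by norm_num) (by norm_num)]
      norm_num)
    simpa [pow_two] using this
  have hy2 : MemLp (fun ω => y ω ^ 2) 2 P := by
    have := aux_mul_memLp hy hy (s := 2) (by
      rw [ENNReal.div_add_div_same, ENNReal.div_eq_div_iff (by norm_num) (by norm_num)
        (by norm_num) (by norm_num)]
      norm_num)
    simpa [pow_two] using this
  rw [← memLp_one_iff_integrable]
  exact aux_mul_memLp hx2 hy2 (by
    rw [ENNReal.div_add_div_same, ENNReal.div_eq_div_iff (by norm_num) (by norm_num)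
      (by norm_num) (by norm_num)]
    norm_num)

lemma aux_sq_int' {x : Ω → ℝ} (hx : MemLp x 4 P) :
    Integrable (fun ω => x ω ^ 2) P := by
  have hx2 : MemLp x 2 P := hx.mono_exponent (by norm_num)
  rw [← memLp_one_iff_integrable]
  have := aux_mul_memLp hx2 hx2 (s := 1) (by
    rw [ENNReal.div_add_div_same, ENNReal.div_eq_div_iff (by norm_num) (by norm_num)
      (by norm_num) (by norm_num)]
    norm_num)
  simpa [pow_two] using this
end A4


/-- Factor model implies the fourth-moment condition: if `z` has independent
coordinates with mean `0`, variance `1`, fourth moment `3 + Δ` (`Δ ≥ -1`) and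
finite eighth moments, and `E[(zᵀVz - tr V)⁴] ≤ C (tr V²)²` for every real
symmetric `V`, then for `φ = Γz`, `Σ = ΓΓᵀ` and the centralized induced sample
`u_{(a,b)} = φ_a φ_b - Σ_{ab}`, we have `E‖Bu‖⁴ ≤ C (E‖Bu‖²)²` for every real
`q × K²` matrix `B`. -/
theorem factor_model_fourth_moment_condition
    {Ω : Type*} [MeasurableSpace Ω] (P : Measure Ω) [IsProbabilityMeasure P]
    (p K : ℕ) (Δ : ℝ) (hΔ : -1 ≤ Δ) (C : ℝ) (hC : 0 ≤ C)
    (z : Ω → Fin p → ℝ)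
    (hmeas : ∀ j, Measurable fun ω => z ω j)
    (hindep : iIndepFun (fun j ω => z ω j) P)
    (hmom8 : ∀ j, Integrable (fun ω => z ω j ^ 8) P)
    (hmean : ∀ j, ∫ ω, z ω j ∂P = 0)
    (hvar : ∀ j, ∫ ω, z ω j ^ 2 ∂P = 1)
    (hkurt : ∀ j, ∫ ω, z ω j ^ 4 ∂P = 3 + Δ)
    (hquad : ∀ V : Matrix (Fin p) (Fin p) ℝ, V.IsSymm →
      ∫ ω, ((∑ a, ∑ b, z ω a * V a b * z ω b) - V.trace) ^ 4 ∂P ≤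
        C * ((V * V).trace) ^ 2)
    (Γ : Matrix (Fin K) (Fin p) ℝ)
    (φ : Ω → Fin K → ℝ) (hφ : φ = fun ω => Γ.mulVec (z ω))
    (Sig : Matrix (Fin K) (Fin K) ℝ) (hSig : Sig = Γ * Γ.transpose)
    (u : Ω → Fin K × Fin K → ℝ)
    (hu : u = fun ω ab => φ ω ab.1 * φ ω ab.2 - Sig ab.1 ab.2) :
    ∀ (q : ℕ) (B : Matrix (Fin q) (Fin K × Fin K) ℝ),
      ∫ ω, (∑ ℓ, B.mulVec (u ω) ℓ ^ 2) ^ 2 ∂P ≤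
        C * (∫ ω, ∑ ℓ, B.mulVec (u ω) ℓ ^ 2 ∂P) ^ 2 := by
  intro q B
  classical
  -- choose symmetric matrices representing each coordinate of Bu
  choose V hVsymm hVrep using fun ℓ : Fin q => aux_repr Γ B ℓ
  have hxptw : ∀ (ℓ : Fin q) (ω : Ω), B.mulVec (u ω) ℓ
      = (∑ a, ∑ b, z ω a * V ℓ a b * z ω b) - (V ℓ).trace := by
    intro ℓ ω
    rw [hu, hφ, hSig]
    exact hVrep ℓ (z ω)
  -- membership in L^4
  have hz8 : ∀ j, MemLp (fun ω => z ω j) 8 P := fun j => aux_z_memLp8 hmeas hmom8 j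
  have harith84 : (1 : ℝ≥0∞)/4 = 1/8 + 1/8 := by
    rw [ENNReal.div_add_div_same, ENNReal.div_eq_div_iff (by norm_num) (by norm_num)
      (by norm_num) (by norm_num)]
    norm_num
  have hzz4 : ∀ a b : Fin p, MemLp (fun ω => z ω a * z ω b) 4 P :=
    fun a b => aux_mul_memLp (hz8 a) (hz8 b) harith84
  have hx4 : ∀ ℓ : Fin q, MemLp (fun ω => B.mulVec (u ω) ℓ) 4 P := by
    intro ℓ
    have hxf : (fun ω => B.mulVec (u ω) ℓ)
        = fun ω => (∑ a, ∑ b, z ω a * V ℓ a b * z ω b) - (V ℓ).trace := by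
      funext ω; exact hxptw ℓ ω
    rw [hxf]
    have hQ4 : MemLp (fun ω => ∑ a, ∑ b, z ω a * V ℓ a b * z ω b) 4 P := by
      refine memLp_finset_sum _ fun a _ => memLp_finset_sum _ fun b _ => ?_
      have h1 : (fun ω => z ω a * V ℓ a b * z ω b)
          = fun ω => V ℓ a b * (z ω a * z ω b) := by funext ω; ring
      rw [h1]
      exact (hzz4 a b).const_mul _
    exact hQ4.sub (memLp_const _)
  -- abbreviations
  have ht : ∀ ℓ : Fin q, True := fun _ => trivial
  have hsecond := fun ℓ : Fin q =>
    aux_second hmeas hindep hmom8 hmean hvar hkurt hΔ (V ℓ) (hVsymm ℓ)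
  have hx2int : ∀ ℓ : Fin q, Integrable (fun ω => B.mulVec (u ω) ℓ ^ 2) P := by
    intro ℓ
    have h1 : (fun ω => B.mulVec (u ω) ℓ ^ 2)
        = fun ω => ((∑ a, ∑ b, z ω a * V ℓ a b * z ω b) - (V ℓ).trace) ^ 2 := by
      funext ω; rw [hxptw ℓ ω]
    rw [h1]; exact (hsecond ℓ).1
  have htnonneg : ∀ ℓ, 0 ≤ (V ℓ * V ℓ).trace := fun ℓ => (hsecond ℓ).2.1
  have hte : ∀ ℓ, (V ℓ * V ℓ).trace ≤ (∫ ω, B.mulVec (u ω) ℓ ^ 2 ∂P) := by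
    intro ℓ
    have h1 : (∫ ω, B.mulVec (u ω) ℓ ^ 2 ∂P) = ∫ ω, ((∑ a, ∑ b, z ω a * V ℓ a b * z ω b) - (V ℓ).trace) ^ 2 ∂P := by
      rw [show (fun ω => B.mulVec (u ω) ℓ ^ 2)
        = fun ω => ((∑ a, ∑ b, z ω a * V ℓ a b * z ω b) - (V ℓ).trace) ^ 2
        from funext fun ω => by rw [hxptw ℓ ω]]
    rw [h1]
    exact (hsecond ℓ).2.2
  have hf4 : ∀ ℓ, ∫ ω, B.mulVec (u ω) ℓ ^ 4 ∂P ≤ C * ((V ℓ * V ℓ).trace) ^ 2 := by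
    intro ℓ
    have h1 : ∫ ω, B.mulVec (u ω) ℓ ^ 4 ∂P
        = ∫ ω, ((∑ a, ∑ b, z ω a * V ℓ a b * z ω b) - (V ℓ).trace) ^ 4 ∂P := by
      rw [show (fun ω => B.mulVec (u ω) ℓ ^ 4)
        = fun ω => ((∑ a, ∑ b, z ω a * V ℓ a b * z ω b) - (V ℓ).trace) ^ 4
        from funext fun ω => by rw [hxptw ℓ ω]]
    rw [h1]
    exact hquad (V ℓ) (hVsymm ℓ)
  have hf4nonneg : ∀ ℓ, 0 ≤ ∫ ω, B.mulVec (u ω) ℓ ^ 4 ∂P :=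
    fun ℓ => integral_nonneg fun ω => by positivity
  -- sqrt of fourth moment bounded by sqrt C * t
  have hsqrt : ∀ ℓ, Real.sqrt (∫ ω, B.mulVec (u ω) ℓ ^ 4 ∂P) ≤ Real.sqrt C * (V ℓ * V ℓ).trace := by
    intro ℓ
    have h1 : Real.sqrt (∫ ω, B.mulVec (u ω) ℓ ^ 4 ∂P) ≤ Real.sqrt (C * ((V ℓ * V ℓ).trace) ^ 2) :=
      Real.sqrt_le_sqrt (hf4 ℓ)
    have h2 : Real.sqrt (C * ((V ℓ * V ℓ).trace) ^ 2) = Real.sqrt C * (V ℓ * V ℓ).trace := by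
      rw [Real.sqrt_mul hC, Real.sqrt_sq (htnonneg ℓ)]
    rw [← h2]; exact h1
  -- expand the square of the sum
  have hexp : (fun ω => (∑ ℓ, B.mulVec (u ω) ℓ ^ 2) ^ 2)
      = fun ω => ∑ ℓ, ∑ m, B.mulVec (u ω) ℓ ^ 2 * B.mulVec (u ω) m ^ 2 := by
    funext ω
    rw [sq, Finset.sum_mul_sum]
  have hprodint : ∀ ℓ m : Fin q,
      Integrable (fun ω => B.mulVec (u ω) ℓ ^ 2 * B.mulVec (u ω) m ^ 2) P :=
    fun ℓ m => aux_sq_int (hx4 ℓ) (hx4 m)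
  have hLHS : ∫ ω, (∑ ℓ, B.mulVec (u ω) ℓ ^ 2) ^ 2 ∂P
      = ∑ ℓ, ∑ m, ∫ ω, B.mulVec (u ω) ℓ ^ 2 * B.mulVec (u ω) m ^ 2 ∂P := by
    rw [hexp, integral_finset_sum _ fun ℓ _ => integrable_finset_sum _ fun m _ => hprodint ℓ m]
    exact Finset.sum_congr rfl fun ℓ _ => integral_finset_sum _ fun m _ => hprodint ℓ m
  have hRHS : ∫ ω, ∑ ℓ, B.mulVec (u ω) ℓ ^ 2 ∂P = ∑ ℓ, (∫ ω, B.mulVec (u ω) ℓ ^ 2 ∂P) := by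
    rw [integral_finset_sum _ fun ℓ _ => hx2int ℓ]
  rw [hLHS, hRHS]
  -- bound each term by Cauchy-Schwarz
  have hstep : ∑ ℓ, ∑ m, ∫ ω, B.mulVec (u ω) ℓ ^ 2 * B.mulVec (u ω) m ^ 2 ∂P
      ≤ ∑ ℓ, ∑ m, (Real.sqrt C * (V ℓ * V ℓ).trace) * (Real.sqrt C * (V m * V m).trace) := by
    refine Finset.sum_le_sum fun ℓ _ => Finset.sum_le_sum fun m _ => ?_
    have hcs := aux_cs (hx4 ℓ) (hx4 m)
    refine hcs.trans ?_
    have h1 : 0 ≤ Real.sqrt (∫ ω, B.mulVec (u ω) m ^ 4 ∂P) := Real.sqrt_nonneg _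
    have h2 : 0 ≤ Real.sqrt C * (V ℓ * V ℓ).trace :=
      mul_nonneg (Real.sqrt_nonneg _) (htnonneg ℓ)
    exact mul_le_mul (hsqrt ℓ) (hsqrt m) h1 h2
  refine hstep.trans ?_
  have hsum : ∑ ℓ, ∑ m, (Real.sqrt C * (V ℓ * V ℓ).trace) * (Real.sqrt C * (V m * V m).trace)
      = C * (∑ ℓ, (V ℓ * V ℓ).trace) ^ 2 := by
    have hterm : ∀ x y : ℝ, (Real.sqrt C * x) * (Real.sqrt C * y) = C * (x * y) := by
      intro x y; linear_combination x * y * Real.mul_self_sqrt hC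
    simp only [hterm]
    calc ∑ ℓ, ∑ m, C * ((V ℓ * V ℓ).trace * (V m * V m).trace)
        = C * ∑ ℓ, ∑ m, (V ℓ * V ℓ).trace * (V m * V m).trace := by
          rw [Finset.mul_sum]
          exact Finset.sum_congr rfl fun ℓ _ => (Finset.mul_sum _ _ _).symm
      _ = C * ((∑ ℓ, (V ℓ * V ℓ).trace) * (∑ m, (V m * V m).trace)) := by
          rw [Finset.sum_mul_sum]
      _ = C * (∑ ℓ, (V ℓ * V ℓ).trace) ^ 2 := by rw [sq]
  rw [hsum]
  have hfin : (∑ ℓ, (V ℓ * V ℓ).trace) ^ 2 ≤ (∑ ℓ, (∫ ω, B.mulVec (u ω) ℓ ^ 2 ∂P)) ^ 2 := by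
    have h1 : ∑ ℓ, (V ℓ * V ℓ).trace ≤ ∑ ℓ, (∫ ω, B.mulVec (u ω) ℓ ^ 2 ∂P) := Finset.sum_le_sum fun ℓ _ => hte ℓ
    have h2 : 0 ≤ ∑ ℓ, (V ℓ * V ℓ).trace := Finset.sum_nonneg fun ℓ _ => htnonneg ℓ
    exact pow_le_pow_left₀ h2 h1 2
  exact mul_le_mul_of_nonneg_left hfin hC
end
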